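/- Lemma 5 (allocation-level form): Z'_max = Z_max + |D|, and every feasible allocation π' of P' with Z(π') = Z'_max assigns all dummy jobs of D; moreover its real restriction is a feasible allocation of P with Z = Z_max whose sorted vector equals φ_f (i.e., the fairness vector realized by any maximum allocation of P' is exactly the max-lexmin fairness vector of P). -/

import Mathlib

/-- A feasible allocation: every assigned triple was bid on, every job is
assigned at most once, and capacities are respected. -/
def Feasible {J T K : Type*} [DecidableEq J] [DecidableEq T] [DecidableEq K]
    (b : J → T → K → Prop) (n : K → T → ℕ) (π : Finset (J × T × K)) : Prop :=
  (∀ x ∈ π, b x.1 x.2.1 x.2.2) ∧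
  (∀ j : J, (π.filter (fun x => x.1 = j)).card ≤ 1) ∧
  (∀ (k : K) (t : T), (π.filter (fun x => x.2.1 = t ∧ x.2.2 = k)).card ≤ n k t)

/-- Number of jobs a company `k` receives in allocation `π`. -/
def alloc {J T K : Type*} [DecidableEq K]
    (π : Finset (J × T × K)) (k : K) : ℕ :=
  (π.filter (fun x => x.2.2 = k)).card

/-- Total compensation of an allocation. -/
def cost {J T K : Type*} (c : J → T → K → ℕ) (π : Finset (J × T × K)) : ℕ :=
  ∑ x ∈ π, c x.1 x.2.1 x.2.2

/-- The maximum number of allocatable jobs. -/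
noncomputable def Zmax {J T K : Type*} [DecidableEq J] [DecidableEq T] [DecidableEq K]
    (b : J → T → K → Prop) (n : K → T → ℕ) : ℕ :=
  sSup {z | ∃ π : Finset (J × T × K), Feasible b n π ∧ π.card = z}

/-- The allocation vector of `π` sorted in nondecreasing order. -/
def sortedVec {J T K : Type*} [Fintype K] [DecidableEq K]
    (π : Finset (J × T × K)) : List ℕ :=
  Multiset.sort (Finset.univ.val.map (fun k => alloc π k)) (· ≤ ·)

/-- `π` is a max-lexmin fair maximum allocation. -/
noncomputable def MaxLexminFair {J T K : Type*} [Fintype K]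
    [DecidableEq J] [DecidableEq T] [DecidableEq K]
    (b : J → T → K → Prop) (n : K → T → ℕ) (π : Finset (J × T × K)) : Prop :=
  Feasible b n π ∧ π.card = Zmax b n ∧
    ∀ π' : Finset (J × T × K), Feasible b n π' → π'.card = Zmax b n →
      sortedVec π' = sortedVec π ∨ List.Lex (· < ·) (sortedVec π') (sortedVec π)


/-! ## The dummy-augmented instance `P'` of Section 3.2.

Given the max-lexmin fair sorted vector `φf = (φ_1 ≤ … ≤ φ_|K|)` of `P`,
we add `L = φ_|K| - φ_1` dummy layers; layer `l` (`0`-indexed) carries one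
dummy time and `#{i : φ_i < φ_1 + l + 1}` dummy jobs of cost `0` that every
company bids on with capacity `1` per dummy time.  In `P'` each company may
receive at most `φ_|K|` jobs in total. -/

/-- Number `L` of dummy layers: largest minus smallest entry of `φf`. -/
def Ldim (φf : List ℕ) : ℕ := φf.getLast! - φf.head!

/-- Number of dummy jobs in (0-indexed) layer `l`: the number of entries of
`φf` smaller than `φ_1 + (l + 1)`. -/
def layerSize (φf : List ℕ) (l : ℕ) : ℕ :=
  (φf.filter (fun x => x < φf.head! + l + 1)).length

/-- The finite type of dummy jobs: layer `l` carries `layerSize φf l` jobs. -/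
abbrev Dummy (φf : List ℕ) : Type := (l : Fin (Ldim φf)) × Fin (layerSize φf l)

/-- Bids of `P'`: the original bids on real jobs at real times, plus a bid of
every company on every dummy job of layer `l` at the dummy time of layer `l`. -/
def bidAug {J T K : Type*} (b : J → T → K → Prop) (φf : List ℕ) :
    (J ⊕ Dummy φf) → (T ⊕ Fin (Ldim φf)) → K → Prop
  | Sum.inl j, Sum.inl t, k => b j t k
  | Sum.inr d, Sum.inr l, _ => d.1 = l
  | _, _, _ => False

/-- Costs of `P'`: original costs on real triples, `0` on dummy triples. -/
def costAug {J T K : Type*} (c : J → T → K → ℕ) (φf : List ℕ) :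
    (J ⊕ Dummy φf) → (T ⊕ Fin (Ldim φf)) → K → ℕ
  | Sum.inl j, Sum.inl t, k => c j t k
  | _, _, _ => 0

/-- Capacities of `P'`: original capacities at real times, capacity `1` for
every company at every dummy time. -/
def capAug {T K : Type*} (n : K → T → ℕ) (φf : List ℕ) :
    K → (T ⊕ Fin (Ldim φf)) → ℕ :=
  fun k t => match t with
  | Sum.inl t => n k t
  | Sum.inr _ => 1

/-- Feasibility for `P'`: feasibility for the augmented bids and capacities,
together with the requirement that each company receives at most `φ_|K|`
(the largest entry of `φf`) jobs in total. -/
def FeasibleAug {J T K : Type*} [DecidableEq J] [DecidableEq T] [DecidableEq K]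
    (b : J → T → K → Prop) (n : K → T → ℕ) (φf : List ℕ)
    (π' : Finset ((J ⊕ Dummy φf) × (T ⊕ Fin (Ldim φf)) × K)) : Prop :=
  Feasible (bidAug b φf) (capAug n φf) π' ∧ ∀ k : K, alloc π' k ≤ φf.getLast!

/-- The maximum number of allocatable jobs in `P'`. -/
noncomputable def ZmaxAug {J T K : Type*} [DecidableEq J] [DecidableEq T] [DecidableEq K]
    (b : J → T → K → Prop) (n : K → T → ℕ) (φf : List ℕ) : ℕ :=
  sSup {z | ∃ π' : Finset ((J ⊕ Dummy φf) × (T ⊕ Fin (Ldim φf)) × K),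
    FeasibleAug b n φf π' ∧ π'.card = z}

/-- Real restriction of an allocation of `P'`: the triples whose job lies in
`J` (feasibility forces their time to lie in `T`), viewed in `J × T × K`. -/
def restrict {J T K D T' : Type*} [DecidableEq J] [DecidableEq T] [DecidableEq K]
    (π' : Finset ((J ⊕ D) × (T ⊕ T') × K)) : Finset (J × T × K) :=
  π'.filterMap
    (fun x => match x with
      | (Sum.inl j, Sum.inl t, k) => some (j, t, k)
      | _ => none)
    (by rintro ⟨j₁ | d₁, t₁ | l₁, k₁⟩ ⟨j₂ | d₂, t₂ | l₂, k₂⟩ x h₁ h₂ <;>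
          simp_all <;> subst h₁ <;> simp_all)

/-- The embedding of real triples into the triples of `P'`. -/
def embTriple {J T K D T' : Type*} (x : J × T × K) : (J ⊕ D) × (T ⊕ T') × K :=
  (Sum.inl x.1, Sum.inl x.2.1, x.2.2)

/-!
Feasible allocations of `P'` are pairs of a feasible allocation of `P` and an assignment of
dummy jobs that gives each company at most one dummy job per layer. Layer `l` has as many dummy
jobs as there are companies with `φ_k ≤ φ₁ + l`, so a fair maximum allocation of `P` can be
topped up to `φ_max` jobs for every company, giving `Z'_max = Z_max + |D|`.

Conversely, a maximum allocation of `P'` fills every company to exactly `φ_max`. Since a company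
gets at most one dummy job per layer, its real load `r_k` forces at least `v - r_k` of its dummy
jobs into the layers below level `v`, and these layers hold only `∑ₖ (v - φ_k)` dummy jobs. The
deficits `∑ₖ (v - r_k) ≤ ∑ₖ (v - φ_k)` at every level make the sorted real loads lexicographically
at least `φ`, and max-lexmin fairness forces equality.
-/

open Finset hiding restrict

theorem List.Pairwise.rel_getLast! {α : Type*} [Inhabited α] {R : α → α → Prop} [Std.Refl R]
    {l : List α} {a : α} (h : l.Pairwise R) (ha : a ∈ l) : R a l.getLast! := by
  rw [List.getLast!_of_getLast? (List.getLast?_eq_some_getLast (List.ne_nil_of_mem ha))]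
  exact h.rel_getLast ha

theorem List.Pairwise.head!_rel_getLast! {α : Type*} [Inhabited α] {R : α → α → Prop}
    [Std.Refl R] {l : List α} (h : l.Pairwise R) : R l.head! l.getLast! := by
  rcases eq_or_ne l [] with rfl | hl
  · exact refl_of R _
  · exact h.rel_getLast! (List.head!_mem_self hl)

theorem List.eq_or_lex_of_sum_tsub_le :
    ∀ {A B : List ℕ}, A.Pairwise (· ≤ ·) → A.length = B.length →
      (∀ v ∈ A, (B.map (v - ·)).sum ≤ (A.map (v - ·)).sum) → A = B ∨ List.Lex (· < ·) A B
  | [], [], _, _, _ => Or.inl rfl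
  | a :: A, b :: B, hA, hlen, h => by
    have hA₀ : ((a :: A).map (a - ·)).sum = 0 :=
      List.sum_eq_zero fun x hx => by
        obtain ⟨y, hy, rfl⟩ := List.mem_map.mp hx
        exact Nat.sub_eq_zero_of_le (hA.head!_le hy)
    have hab : a ≤ b := by
      have := h a List.mem_cons_self
      rw [hA₀, Nat.le_zero, List.map_cons, List.sum_cons] at this
      omega
    rcases hab.lt_or_eq with hab | rfl
    · exact Or.inr (List.Lex.rel hab)
    · have htail : ∀ v ∈ A, (B.map (v - ·)).sum ≤ (A.map (v - ·)).sum := fun v hv => by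
        simpa using h v (List.mem_cons_of_mem _ hv)
      rcases eq_or_lex_of_sum_tsub_le hA.of_cons (by simpa using hlen) htail with rfl | hlex
      · exact Or.inl rfl
      · exact Or.inr (List.Lex.cons hlex)

theorem Finset.sum_range_card_filter_lt_add {ι : Type*} (s : Finset ι) (a : ι → ℕ) {p : ℕ}
    (c : ℕ) (h : ∀ i ∈ s, p ≤ a i) :
    ∑ l ∈ range c, #{i ∈ s | a i < p + l + 1} = ∑ i ∈ s, (p + c - a i) := by
  simp_rw [card_filter]
  rw [sum_comm]
  refine sum_congr rfl fun i hi => ?_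
  rw [← card_filter, show {l ∈ range c | a i < p + l + 1} = Ico (a i - p) c by
    ext l; simp only [mem_filter, mem_range, mem_Ico]; omega, Nat.card_Ico]
  have := h i hi
  omega

theorem Finset.card_filter_le_one_iff_injOn {α β : Type*} [DecidableEq β] {s : Finset α}
    {f : α → β} : (∀ y, #{x ∈ s | f x = y} ≤ 1) ↔ Set.InjOn f s := by
  refine ⟨fun h x hx x' hx' hxx' => ?_, fun h y => card_le_one.mpr fun x hx x' hx' => ?_⟩
  · exact card_le_one.mp (h (f x)) x (mem_filter.mpr ⟨hx, rfl⟩) x' (mem_filter.mpr ⟨hx', hxx'.symm⟩)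
  · rw [mem_filter] at hx hx'
    exact h hx.1 hx'.1 (hx.2.trans hx'.2.symm)

section SortedVec

variable {J T K : Type*} [Fintype K] [DecidableEq K] (π : Finset (J × T × K))

theorem coe_sortedVec : (sortedVec π : Multiset ℕ) = univ.val.map (alloc π) :=
  Multiset.sort_eq _ _

theorem sum_map_sortedVec (f : ℕ → ℕ) : ((sortedVec π).map f).sum = ∑ k, f (alloc π k) := by
  rw [← Multiset.sum_coe, ← Multiset.map_coe, coe_sortedVec, Multiset.map_map]
  rfl

theorem length_filter_sortedVec (p : ℕ → Prop) [DecidablePred p] :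
    ((sortedVec π).filter p).length = #{k | p (alloc π k)} := by
  rw [← Multiset.coe_card, ← Multiset.filter_coe, coe_sortedVec, Multiset.filter_map,
    Multiset.card_map]
  rfl

theorem length_sortedVec : (sortedVec π).length = Fintype.card K := by
  simp [sortedVec]

theorem pairwise_sortedVec : (sortedVec π).Pairwise (· ≤ ·) :=
  Multiset.pairwise_sort _ _

theorem mem_sortedVec {x : ℕ} : x ∈ sortedVec π ↔ ∃ k, alloc π k = x := by
  simp [sortedVec]

theorem head!_sortedVec_le (k : K) : (sortedVec π).head! ≤ alloc π k :=
  (pairwise_sortedVec π).head!_le ((mem_sortedVec π).mpr ⟨k, rfl⟩)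

theorem le_getLast!_sortedVec (k : K) : alloc π k ≤ (sortedVec π).getLast! :=
  (pairwise_sortedVec π).rel_getLast! ((mem_sortedVec π).mpr ⟨k, rfl⟩)

theorem layerSize_sortedVec (l : ℕ) :
    layerSize (sortedVec π) l = #{k | alloc π k < (sortedVec π).head! + l + 1} :=
  length_filter_sortedVec π _

theorem eq_or_lex_sortedVec_of_sum_tsub_le (π' : Finset (J × T × K))
    (h : ∀ v, (sortedVec π).head! ≤ v → v ≤ (sortedVec π).getLast! →
      ∑ k, (v - alloc π' k) ≤ ∑ k, (v - alloc π k)) :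
    sortedVec π = sortedVec π' ∨ List.Lex (· < ·) (sortedVec π) (sortedVec π') := by
  refine List.eq_or_lex_of_sum_tsub_le (pairwise_sortedVec π)
    (by rw [length_sortedVec, length_sortedVec]) fun v hv => ?_
  rw [sum_map_sortedVec, sum_map_sortedVec]
  exact h v ((pairwise_sortedVec π).head!_le hv) ((pairwise_sortedVec π).rel_getLast! hv)

end SortedVec

theorem card_dummy_filter_layer_lt (φ : List ℕ) {c : ℕ} (hc : c ≤ Ldim φ) :
    #{d : Dummy φ | (d.1 : ℕ) < c} = ∑ l ∈ range c, layerSize φ l := by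
  have hsigma : ({d : Dummy φ | (d.1 : ℕ) < c} : Finset _)
      = ({l : Fin (Ldim φ) | (l : ℕ) < c} : Finset _).sigma fun _ => univ := by
    ext d; simp
  have hrange : ({l : Fin (Ldim φ) | (l : ℕ) < c} : Finset _).map Fin.valEmbedding = range c := by
    ext l; simp only [mem_map, mem_filter, mem_univ, true_and, Fin.valEmbedding_apply, mem_range]
    exact ⟨fun ⟨l', hl', h⟩ => h ▸ hl', fun hl => ⟨⟨l, by omega⟩, hl, rfl⟩⟩
  rw [hsigma, card_sigma, ← hrange, sum_map]
  simp

section WithDummies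

variable {J T K : Type*} {φ : List ℕ}

def dummyTriple (x : Dummy φ × K) : (J ⊕ Dummy φ) × (T ⊕ Fin (Ldim φ)) × K :=
  (Sum.inr x.1, Sum.inr x.1.1, x.2)

theorem embTriple_injective {D T' : Type*} :
    Function.Injective (embTriple : J × T × K → (J ⊕ D) × (T ⊕ T') × K) := by
  rintro ⟨j, t, k⟩ ⟨j', t', k'⟩ h
  simpa [embTriple] using h

theorem dummyTriple_injective :
    Function.Injective (dummyTriple : Dummy φ × K → (J ⊕ Dummy φ) × (T ⊕ Fin (Ldim φ)) × K) := by
  rintro ⟨d, k⟩ ⟨d', k'⟩ h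
  simp_all [dummyTriple]

variable [DecidableEq J] [DecidableEq T] [DecidableEq K]

/-- The allocation of `P'` that follows `π` on the real jobs and assigns the dummy job `d` to
the company `k` (at the dummy time of its layer) for every `(d, k) ∈ A`. -/
def withDummies (π : Finset (J × T × K)) (A : Finset (Dummy φ × K)) :
    Finset ((J ⊕ Dummy φ) × (T ⊕ Fin (Ldim φ)) × K) :=
  π.image embTriple ∪ A.image dummyTriple

def DummyFeasible (A : Finset (Dummy φ × K)) : Prop :=
  Set.InjOn Prod.fst (A : Set (Dummy φ × K)) ∧
    ∀ k, Set.InjOn (fun x => x.1.1) ({x ∈ A | x.2 = k} : Set (Dummy φ × K))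

theorem disjoint_image_embTriple_image_dummyTriple (π : Finset (J × T × K))
    (A : Finset (Dummy φ × K)) : Disjoint (π.image embTriple) (A.image dummyTriple) := by
  simp [disjoint_left, embTriple, dummyTriple]

theorem card_filter_withDummies (π : Finset (J × T × K)) (A : Finset (Dummy φ × K))
    (p : (J ⊕ Dummy φ) × (T ⊕ Fin (Ldim φ)) × K → Prop) [DecidablePred p] :
    #{x ∈ withDummies π A | p x} = #{y ∈ π | p (embTriple y)} + #{x ∈ A | p (dummyTriple x)} := by
  rw [withDummies, filter_union, filter_image, filter_image,
    card_union_of_disjoint (disjoint_image_embTriple_image_dummyTriple _ _),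
    card_image_of_injective _ embTriple_injective, card_image_of_injective _ dummyTriple_injective]

theorem card_withDummies (π : Finset (J × T × K)) (A : Finset (Dummy φ × K)) :
    #(withDummies π A) = #π + #A := by
  simpa using card_filter_withDummies π A fun _ => True

theorem alloc_withDummies (π : Finset (J × T × K)) (A : Finset (Dummy φ × K)) (k : K) :
    alloc (withDummies π A) k = alloc π k + #{x ∈ A | x.2 = k} :=
  card_filter_withDummies π A _

theorem mem_restrict {D T' : Type*} {π' : Finset ((J ⊕ D) × (T ⊕ T') × K)} {y : J × T × K} :
    y ∈ restrict π' ↔ embTriple y ∈ π' := by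
  obtain ⟨j, t, k⟩ := y
  simp [restrict, embTriple]

theorem restrict_withDummies (π : Finset (J × T × K)) (A : Finset (Dummy φ × K)) :
    restrict (withDummies π A) = π := by
  ext y
  simp [mem_restrict, withDummies, embTriple, dummyTriple]

theorem exists_eq_withDummies {b : J → T → K → Prop}
    {π' : Finset ((J ⊕ Dummy φ) × (T ⊕ Fin (Ldim φ)) × K)}
    (hb : ∀ x ∈ π', bidAug b φ x.1 x.2.1 x.2.2) :
    ∃ π A, π' = withDummies π A := by
  refine ⟨restrict π', π'.preimage dummyTriple dummyTriple_injective.injOn,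
    ext fun x => ⟨fun hx => ?_, fun hx => ?_⟩⟩
  · obtain ⟨j | d, t | l, k⟩ := x
    · exact mem_union_left _ (mem_image.mpr ⟨(j, t, k), mem_restrict.mpr hx, rfl⟩)
    · exact (hb _ hx).elim
    · exact (hb _ hx).elim
    · obtain rfl : d.1 = l := hb _ hx
      exact mem_union_right _ (mem_image.mpr ⟨(d, k), mem_preimage.mpr hx, rfl⟩)
  · rcases mem_union.mp hx with hx | hx
    · obtain ⟨y, hy, rfl⟩ := mem_image.mp hx
      exact mem_restrict.mp hy
    · obtain ⟨z, hz, rfl⟩ := mem_image.mp hx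
      exact mem_preimage.mp hz

end WithDummies

section WithDummiesFeasible

variable {J T K : Type*} [DecidableEq J] [DecidableEq T] [DecidableEq K] {φ : List ℕ}
  {b : J → T → K → Prop} {n : K → T → ℕ} {π : Finset (J × T × K)} {A : Finset (Dummy φ × K)}

theorem feasible_withDummies_iff :
    Feasible (bidAug b φ) (capAug n φ) (withDummies π A) ↔ Feasible b n π ∧ DummyFeasible A := by
  have hbid : (∀ x ∈ withDummies π A, bidAug b φ x.1 x.2.1 x.2.2) ↔ ∀ y ∈ π, b y.1 y.2.1 y.2.2 := by
    refine ⟨fun h y hy => h _ (mem_union_left _ (mem_image_of_mem _ hy)), fun h x hx => ?_⟩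
    rcases mem_union.mp hx with hx | hx
    · obtain ⟨y, hy, rfl⟩ := mem_image.mp hx
      exact h y hy
    · obtain ⟨z, -, rfl⟩ := mem_image.mp hx
      exact rfl
  have hjob (j : J) :
      #{x ∈ withDummies π A | x.1 = Sum.inl j} = #{y ∈ π | y.1 = j} := by
    simp [card_filter_withDummies, embTriple, dummyTriple]
  have hjobDummy (d : Dummy φ) :
      #{x ∈ withDummies π A | x.1 = Sum.inr d} = #{x ∈ A | x.1 = d} := by
    simp [card_filter_withDummies, embTriple, dummyTriple]
  have hcap (k : K) (t : T) : #{x ∈ withDummies π A | x.2.1 = Sum.inl t ∧ x.2.2 = k}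
      = #{y ∈ π | y.2.1 = t ∧ y.2.2 = k} := by
    simp [card_filter_withDummies, embTriple, dummyTriple]
  have hcapDummy (k : K) (l : Fin (Ldim φ)) : #{x ∈ withDummies π A | x.2.1 = Sum.inr l ∧ x.2.2 = k}
      = #{x ∈ {x ∈ A | x.2 = k} | x.1.1 = l} := by
    simp [card_filter_withDummies, embTriple, dummyTriple, filter_filter, and_comm]
  simp only [Feasible, DummyFeasible, Sum.forall, hbid, hjob, hjobDummy, hcap, hcapDummy, capAug,
    ← card_filter_le_one_iff_injOn, ← coe_filter, forall_and]
  tauto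

end WithDummiesFeasible

namespace DummyFeasible

variable {K : Type*} {φ : List ℕ} {A : Finset (Dummy φ × K)}

theorem card_filter_le (hA : DummyFeasible A) (p : Dummy φ → Prop) [DecidablePred p] :
    #{x ∈ A | p x.1} ≤ #{d | p d} :=
  card_le_card_of_injOn Prod.fst (fun x hx => by simp_all)
    (hA.1.mono fun x hx => (mem_filter.mp hx).1)

theorem card_le (hA : DummyFeasible A) : #A ≤ Fintype.card (Dummy φ) := by
  simpa using hA.card_filter_le fun _ => True

theorem exists_mem_of_card_eq (hA : DummyFeasible A) (hcard : #A = Fintype.card (Dummy φ))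
    (d : Dummy φ) : ∃ k, (d, k) ∈ A := by
  have himage : A.image Prod.fst = univ :=
    eq_univ_of_card _ (by rw [card_image_of_injOn hA.1, hcard])
  obtain ⟨x, hx, rfl⟩ := mem_image.mp (himage ▸ mem_univ d)
  exact ⟨x.2, hx⟩

variable [DecidableEq K]

theorem card_filter_layer_ge_le (hA : DummyFeasible A) (k : K) (c : ℕ) :
    #{x ∈ A | x.2 = k ∧ c ≤ x.1.1} ≤ Ldim φ - c := by
  rw [← Nat.card_Ico c (Ldim φ)]
  refine card_le_card_of_injOn (fun x => (x.1.1 : ℕ)) (fun x hx => by simp_all) ?_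
  exact Fin.val_injective.comp_injOn ((hA.2 k).mono fun x hx => by simp_all)

end DummyFeasible

section SortedVecDummies

variable {J T K : Type*} [Fintype K] [DecidableEq K] (π₀ : Finset (J × T × K))

theorem card_dummy_filter_layer_lt_sortedVec {v : ℕ} (h₁ : (sortedVec π₀).head! ≤ v)
    (h₂ : v ≤ (sortedVec π₀).getLast!) :
    #{d : Dummy (sortedVec π₀) | (d.1 : ℕ) < v - (sortedVec π₀).head!}
      = ∑ k, (v - alloc π₀ k) := by
  rw [card_dummy_filter_layer_lt _ (by unfold Ldim; omega)]
  simp_rw [layerSize_sortedVec]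
  rw [sum_range_card_filter_lt_add _ _ _ fun k _ => head!_sortedVec_le π₀ k, Nat.add_sub_cancel' h₁]

theorem card_dummy_sortedVec :
    Fintype.card (Dummy (sortedVec π₀)) = ∑ k, ((sortedVec π₀).getLast! - alloc π₀ k) := by
  rw [← card_dummy_filter_layer_lt_sortedVec π₀ (pairwise_sortedVec π₀).head!_rel_getLast! le_rfl,
    filter_true_of_mem fun d _ => d.1.isLt, card_univ]

/-- Layer `l` has exactly as many dummy jobs as there are companies `k` with
`alloc π₀ k ≤ φ₁ + l`; matching them up gives every company `φ_max - alloc π₀ k` dummy jobs,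
one in each layer `l ≥ alloc π₀ k - φ₁`. -/
theorem exists_dummyFeasible_sortedVec :
    ∃ A : Finset (Dummy (sortedVec π₀) × K), DummyFeasible A ∧
      #A = Fintype.card (Dummy (sortedVec π₀)) ∧
      ∀ k, alloc π₀ k + #{x ∈ A | x.2 = k} ≤ (sortedVec π₀).getLast! := by
  have e (l : Fin (Ldim (sortedVec π₀))) :
      Fin (layerSize (sortedVec π₀) l) ≃ {k // alloc π₀ k < (sortedVec π₀).head! + l + 1} :=
    Fintype.equivOfCardEq (by rw [Fintype.card_fin, Fintype.card_subtype, layerSize_sortedVec])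
  set A := univ.image fun d : Dummy (sortedVec π₀) => (d, (e d.1 d.2 : K)) with hAdef
  have hA : DummyFeasible A := by
    refine ⟨?_, fun k => ?_⟩
    · simp only [hAdef, coe_image, coe_univ, Set.image_univ]
      rintro _ ⟨d, rfl⟩ _ ⟨d', rfl⟩ (rfl : d = d')
      rfl
    · simp only [hAdef, mem_image, mem_univ, true_and, Set.InjOn, Set.mem_ofPred_eq]
      rintro _ ⟨⟨⟨l, i⟩, rfl⟩, rfl⟩ _ ⟨⟨⟨l', i'⟩, rfl⟩, hk⟩ (rfl : l = l')
      obtain rfl := (e l).injective (Subtype.ext hk.symm)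
      rfl
  refine ⟨A, hA, ?_, fun k => ?_⟩
  · rw [card_image_of_injective _ fun d d' h => congrArg Prod.fst h, card_univ]
  · have hlayer : #{x ∈ A | x.2 = k}
        = #{x ∈ A | x.2 = k ∧ alloc π₀ k - (sortedVec π₀).head! ≤ x.1.1} := by
      congr 1
      refine filter_congr fun x hx => ⟨fun hk => ⟨hk, ?_⟩, And.left⟩
      obtain ⟨d, -, rfl⟩ := mem_image.mp hx
      have := (e d.1 d.2).2
      rw [show (e d.1 d.2 : K) = k from hk] at this
      show _ ≤ (d.1 : ℕ)
      omega
    have := hA.card_filter_layer_ge_le k (alloc π₀ k - (sortedVec π₀).head!)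
    have := head!_sortedVec_le π₀ k
    have := le_getLast!_sortedVec π₀ k
    unfold Ldim at *
    omega

end SortedVecDummies

section Counting

variable {J T K : Type*} [Fintype K] [DecidableEq K]

theorem card_eq_sum_alloc (π : Finset (J × T × K)) : #π = ∑ k, alloc π k :=
  card_eq_sum_card_fiberwise fun x _ => mem_univ x.2.2

theorem sum_tsub_alloc {π : Finset (J × T × K)} {m : ℕ} (h : ∀ k, alloc π k ≤ m) :
    ∑ k, (m - alloc π k) = Fintype.card K * m - #π := by
  have : ∑ k, (m - alloc π k) + #π = Fintype.card K * m := by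
    rw [card_eq_sum_alloc, ← sum_add_distrib, sum_congr rfl fun k _ => Nat.sub_add_cancel (h k)]
    simp
  omega

variable {π₀ π : Finset (J × T × K)} {A : Finset (Dummy (sortedVec π₀) × K)}

/-- The bounds `φ_max - alloc π k` add up to `|D| = #A`, because `π` has as many jobs as `π₀`. -/
theorem card_filter_snd_eq_tsub (hcard : #π = #π₀)
    (hAcard : #A = Fintype.card (Dummy (sortedVec π₀)))
    (hcap : ∀ k, alloc π k + #{x ∈ A | x.2 = k} ≤ (sortedVec π₀).getLast!) (k : K) :
    #{x ∈ A | x.2 = k} = (sortedVec π₀).getLast! - alloc π k := by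
  have hsum : ∑ k, #{x ∈ A | x.2 = k} = ∑ k, ((sortedVec π₀).getLast! - alloc π k) := by
    rw [← card_eq_sum_card_fiberwise fun x _ => mem_univ x.2, hAcard, card_dummy_sortedVec,
      sum_tsub_alloc (le_getLast!_sortedVec π₀),
      sum_tsub_alloc fun k => (Nat.le_add_right _ _).trans (hcap k), hcard]
  exact (sum_eq_sum_iff_of_le fun k _ => Nat.le_sub_of_add_le' (hcap k)).mp hsum k (mem_univ k)

/-- Company `k` holds `φ_max - alloc π k` dummy jobs, at most one per layer, so at least
`v - alloc π k` of them lie in the layers below `v - φ₁`; there are only `∑ k, (v - alloc π₀ k)`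
dummy jobs in those layers. -/
theorem sum_tsub_alloc_le (hA : DummyFeasible A)
    (hAk : ∀ k, #{x ∈ A | x.2 = k} = (sortedVec π₀).getLast! - alloc π k) {v : ℕ}
    (h₁ : (sortedVec π₀).head! ≤ v) (h₂ : v ≤ (sortedVec π₀).getLast!) :
    ∑ k, (v - alloc π k) ≤ ∑ k, (v - alloc π₀ k) := by
  set c := v - (sortedVec π₀).head!
  have hlow (k : K) : v - alloc π k ≤ #{x ∈ A | x.2 = k ∧ (x.1.1 : ℕ) < c} := by
    have hsplit : #{x ∈ A | x.2 = k ∧ (x.1.1 : ℕ) < c} + #{x ∈ A | x.2 = k ∧ c ≤ x.1.1}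
        = #{x ∈ A | x.2 = k} := by
      rw [← card_filter_add_card_filter_not (s := {x ∈ A | x.2 = k}) fun x => (x.1.1 : ℕ) < c]
      simp only [filter_filter, not_lt]
    have := hA.card_filter_layer_ge_le k c
    have := hAk k
    unfold Ldim at *
    omega
  calc ∑ k, (v - alloc π k)
      ≤ ∑ k, #{x ∈ A | x.2 = k ∧ (x.1.1 : ℕ) < c} := sum_le_sum fun k _ => hlow k
    _ = #{x ∈ A | (x.1.1 : ℕ) < c} := by
      rw [card_eq_sum_card_fiberwise fun x _ => mem_univ x.2]
      simp only [filter_filter, and_comm]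
    _ ≤ #{d : Dummy (sortedVec π₀) | (d.1 : ℕ) < c} := hA.card_filter_le fun d => (d.1 : ℕ) < c
    _ = ∑ k, (v - alloc π₀ k) := card_dummy_filter_layer_lt_sortedVec π₀ h₁ h₂

end Counting

section Maximum

variable {J T K : Type*} [Fintype J] [Fintype T] [Fintype K]
  [DecidableEq J] [DecidableEq T] [DecidableEq K] {b : J → T → K → Prop} {n : K → T → ℕ}

theorem card_le_Zmax {π : Finset (J × T × K)} (hπ : Feasible b n π) : #π ≤ Zmax b n :=
  le_csSup ⟨Fintype.card (J × T × K), by rintro _ ⟨π, -, rfl⟩; exact card_le_univ π⟩ ⟨π, hπ, rfl⟩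

theorem isGreatest_card_feasibleAug {π₀ : Finset (J × T × K)} (hπ₀ : Feasible b n π₀)
    (hcard : #π₀ = Zmax b n) :
    IsGreatest
      {z | ∃ π' : Finset ((J ⊕ Dummy (sortedVec π₀)) × (T ⊕ Fin (Ldim (sortedVec π₀))) × K),
        FeasibleAug b n (sortedVec π₀) π' ∧ #π' = z}
      (Zmax b n + Fintype.card (Dummy (sortedVec π₀))) := by
  refine ⟨?_, ?_⟩
  · obtain ⟨A, hA, hAcard, hcap⟩ := exists_dummyFeasible_sortedVec π₀
    refine ⟨withDummies π₀ A, ⟨feasible_withDummies_iff.mpr ⟨hπ₀, hA⟩, fun k => ?_⟩, ?_⟩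
    · rw [alloc_withDummies]
      exact hcap k
    · rw [card_withDummies, hAcard, hcard]
  · rintro _ ⟨π', hπ', rfl⟩
    obtain ⟨π, A, rfl⟩ := exists_eq_withDummies hπ'.1.1
    obtain ⟨hπ, hA⟩ := feasible_withDummies_iff.mp hπ'.1
    rw [card_withDummies]
    exact add_le_add (card_le_Zmax hπ) hA.card_le

end Maximum

theorem augmented_maximum_realizes_fairness_vector_general {J T K : Type*}
    [Fintype J] [Fintype T] [Fintype K]
    [DecidableEq J] [DecidableEq T] [DecidableEq K]
    (b : J → T → K → Prop) (n : K → T → ℕ)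
    (φf : List ℕ) (hφf : ∃ π₀ : Finset (J × T × K),
      MaxLexminFair b n π₀ ∧ sortedVec π₀ = φf) :
    ZmaxAug b n φf = Zmax b n + Fintype.card (Dummy φf) ∧
      ∀ π' : Finset ((J ⊕ Dummy φf) × (T ⊕ Fin (Ldim φf)) × K),
        FeasibleAug b n φf π' → π'.card = ZmaxAug b n φf →
          (∀ d : Dummy φf, ∃ x ∈ π', x.1 = Sum.inr d) ∧
          Feasible b n (restrict π') ∧
          (restrict π').card = Zmax b n ∧
          sortedVec (restrict π') = φf := by
  obtain ⟨π₀, ⟨hπ₀, hπ₀card, hfair⟩, rfl⟩ := hφf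
  have hZ := (isGreatest_card_feasibleAug hπ₀ hπ₀card).csSup_eq
  refine ⟨hZ, fun π' hπ' hcard => ?_⟩
  obtain ⟨π, A, rfl⟩ := exists_eq_withDummies hπ'.1.1
  obtain ⟨hπ, hA⟩ := feasible_withDummies_iff.mp hπ'.1
  have hcap k := alloc_withDummies π A k ▸ hπ'.2 k
  obtain ⟨hπcard, hAcard⟩ : #π = Zmax b n ∧ #A = Fintype.card (Dummy (sortedVec π₀)) := by
    have := card_le_Zmax hπ
    have := hA.card_le
    rw [card_withDummies, ZmaxAug, hZ] at hcard
    omega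
  refine ⟨fun d => ?_, by rwa [restrict_withDummies], by rwa [restrict_withDummies], ?_⟩
  · obtain ⟨k, hk⟩ := hA.exists_mem_of_card_eq hAcard d
    exact ⟨dummyTriple (d, k), mem_union_right _ (mem_image_of_mem _ hk), rfl⟩
  rw [restrict_withDummies]
  have hAk := card_filter_snd_eq_tsub (hπcard.trans hπ₀card.symm) hAcard hcap
  rcases hfair π hπ hπcard with h | h
  · exact h
  rcases eq_or_lex_sortedVec_of_sum_tsub_le π₀ π (fun v => sum_tsub_alloc_le hA hAk) with h' | h'
  · exact h'.symm
  · exact absurd h (asymm h')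

/-- Lemma 5, allocation-level form: the maximum value of the
dummy-augmented instance is `Z_max + |D|`; every maximum feasible allocation of
`P'` assigns all dummy jobs, and its real restriction is a feasible maximum
allocation of `P` whose sorted vector is exactly the max-lexmin fairness
vector `φf`. -/
theorem augmented_maximum_realizes_fairness_vector {J T K : Type*}
    [Fintype J] [Fintype T] [Fintype K] [Nonempty J] [Nonempty T] [Nonempty K]
    [DecidableEq J] [DecidableEq T] [DecidableEq K]
    (b : J → T → K → Prop) (n : K → T → ℕ)
    (φf : List ℕ) (hφf : ∃ π₀ : Finset (J × T × K),
      MaxLexminFair b n π₀ ∧ sortedVec π₀ = φf) :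
    ZmaxAug b n φf = Zmax b n + Fintype.card (Dummy φf) ∧
      ∀ π' : Finset ((J ⊕ Dummy φf) × (T ⊕ Fin (Ldim φf)) × K),
        FeasibleAug b n φf π' → π'.card = ZmaxAug b n φf →
          (∀ d : Dummy φf, ∃ x ∈ π', x.1 = Sum.inr d) ∧
          Feasible b n (restrict π') ∧
          (restrict π').card = Zmax b n ∧
          sortedVec (restrict π') = φf :=
  augmented_maximum_realizes_fairness_vector_general b n φf hφf
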